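/- arXiv:1710.03911 — 3 statements merged into one kernel-verified Lean document; each statement's English description precedes it below -/
import Mathlib

section
/- Let μ : ℂˣ × SL(2, ℂ) → GL(2, ℂ) be the group homomorphism μ(λ, h) = λ·h, let G be a finite subgroup of GL(2, ℂ), and let G̃ = μ⁻¹(G). Then the number of conjugacy classes of G̃ is exactly twice the number of conjugacy classes of G. -/
open Matrix

/-- Scalar matrices, as a homomorphism `ℂˣ →* GL(2, ℂ)`. -/
def scalarGL : ℂˣ →* GL (Fin 2) ℂ :=
  Units.map (Matrix.scalar (Fin 2)).toMonoidHom

lemma scalarGL_central (a : ℂˣ) (g : GL (Fin 2) ℂ) :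
    scalarGL a * g = g * scalarGL a := by
  apply Units.ext
  show (Matrix.scalar (Fin 2) (a : ℂ)) * (g : Matrix (Fin 2) (Fin 2) ℂ)
     = (g : Matrix (Fin 2) (Fin 2) ℂ) * (Matrix.scalar (Fin 2) (a : ℂ))
  exact (Matrix.scalar_commute (a : ℂ) (fun r => mul_comm _ _) _)

/-- The homomorphism `μ : ℂˣ × SL(2, ℂ) → GL(2, ℂ)`, `μ(λ, h) = λ·h`. -/
def mu : ℂˣ × Matrix.SpecialLinearGroup (Fin 2) ℂ →* GL (Fin 2) ℂ where
  toFun p := scalarGL p.1 * Matrix.SpecialLinearGroup.toGL p.2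
  map_one' := by simp
  map_mul' p q := by
    simp only [Prod.fst_mul, Prod.snd_mul, _root_.map_mul]
    rw [mul_assoc (scalarGL p.1), ← mul_assoc (scalarGL q.1),
      scalarGL_central q.1 (Matrix.SpecialLinearGroup.toGL p.2)]
    simp [mul_assoc]

/-!
`μ` is surjective (every `g` is `λ · (λ⁻¹ g)` with `λ² = det g`) and its kernel is `{1, -1}`. So for
`x ∈ G̃` the conjugacy classes of `G̃` lying over the class of `μ x` are those of `x` and of `-x`:
if `μ (d x d⁻¹) = μ y` then `d x d⁻¹ = ± y`. These two classes are distinct because conjugation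
does not change the `ℂˣ`-coordinate, while `-x` and `x` have opposite `ℂˣ`-coordinates. Hence
every conjugacy class of `G` has exactly two conjugacy classes of `G̃` above it.
-/

open Cardinal in
theorem Nat.card_eq_card_mul_of_card_preimage {α β : Type*} (f : α → β) {n : ℕ} (hn : n ≠ 0)
    (hf : ∀ b, Nat.card (f ⁻¹' {b}) = n) : Nat.card α = Nat.card β * n := by
  have hfiber (b : β) : #(f ⁻¹' {b}) = n := by
    have := Nat.finite_of_card_ne_zero ((hf b).symm ▸ hn)
    rw [← Nat.cast_card, hf b]
  rw [← Nat.card_congr (Equiv.sigmaFiberEquiv f), Nat.card, mk_sigma]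
  change toNat (sum fun b => #(f ⁻¹' {b})) = _
  simp [hfiber, Nat.card]

section DoubleCover

variable {H G : Type*} [Group H] [Group G] {f : H →* G} {z : H}

theorem isConj_or_isConj_mul_of_isConj_map (hf : Function.Surjective f)
    (hker : ∀ h, f h = 1 ↔ h = 1 ∨ h = z) {x y : H} (hxy : IsConj (f x) (f y)) :
    IsConj x y ∨ IsConj x (z * y) := by
  obtain ⟨c, hc⟩ := isConj_iff.1 hxy
  obtain ⟨d, rfl⟩ := hf c
  rcases (hker (d * x * d⁻¹ * y⁻¹)).1 (by simp [hc]) with h | h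
  · exact .inl (isConj_iff.2 ⟨d, mul_inv_eq_one.1 h⟩)
  · exact .inr (isConj_iff.2 ⟨d, mul_inv_eq_iff_eq_mul.1 h⟩)

theorem ConjClasses.map_preimage_singleton_mk (hf : Function.Surjective f)
    (hker : ∀ h, f h = 1 ↔ h = 1 ∨ h = z) (x : H) :
    ConjClasses.map f ⁻¹' {ConjClasses.mk (f x)} = {ConjClasses.mk x, ConjClasses.mk (z * x)} := by
  have hfz : f z = 1 := (hker z).2 (.inr rfl)
  ext c
  obtain ⟨y, rfl⟩ := ConjClasses.mk_surjective c
  change ConjClasses.mk (f y) = _ ↔ _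
  simp only [Set.mem_insert_iff, Set.mem_singleton_iff, ConjClasses.mk_eq_mk_iff_isConj]
  refine ⟨isConj_or_isConj_mul_of_isConj_map hf hker, ?_⟩
  rintro (h | h)
  · exact f.map_isConj h
  · simpa [hfz] using f.map_isConj h

theorem Nat.card_conjClasses_eq_two_mul (hf : Function.Surjective f)
    (hker : ∀ h, f h = 1 ↔ h = 1 ∨ h = z) (hz : ∀ x, ¬ IsConj (z * x) x) :
    Nat.card (ConjClasses H) = 2 * Nat.card (ConjClasses G) := by
  rw [mul_comm, Nat.card_eq_card_mul_of_card_preimage (ConjClasses.map f) two_ne_zero]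
  intro c
  obtain ⟨x, rfl⟩ := ConjClasses.mk_surjective c
  obtain ⟨x, rfl⟩ := hf x
  rw [ConjClasses.map_preimage_singleton_mk hf hker, Nat.card_coe_set_eq, Set.ncard_pair]
  exact fun h => hz x (ConjClasses.mk_eq_mk_iff_isConj.1 h).symm

theorem Nat.card_conjClasses_comap_eq_two_mul (hf : Function.Surjective f)
    (hker : ∀ h, f h = 1 ↔ h = 1 ∨ h = z) (hz : ∀ x, ¬ IsConj (z * x) x) (K : Subgroup G) :
    Nat.card (ConjClasses (K.comap f)) = 2 * Nat.card (ConjClasses K) := by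
  have hzK : z ∈ K.comap f := by simp [(hker z).2 (.inr rfl)]
  refine Nat.card_conjClasses_eq_two_mul (f := f.subgroupComap K) (z := ⟨z, hzK⟩)
    (f.subgroupComap_surjective_of_surjective K hf) (fun h => ?_) (fun x hx => ?_)
  · simp only [Subtype.ext_iff, OneMemClass.coe_one]
    exact hker h
  · exact hz x ((K.comap f).subtype.map_isConj hx)

end DoubleCover

theorem coe_mu (p : ℂˣ × SpecialLinearGroup (Fin 2) ℂ) :
    ((mu p : GL (Fin 2) ℂ) : Matrix (Fin 2) (Fin 2) ℂ) =
      (p.1 : ℂ) • (p.2 : Matrix (Fin 2) (Fin 2) ℂ) := by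
  show scalar (Fin 2) (p.1 : ℂ) * (p.2 : Matrix (Fin 2) (Fin 2) ℂ) = _
  rw [scalar_apply, ← smul_eq_diagonal_mul]

theorem mu_surjective : Function.Surjective mu := by
  intro g
  have hdet : (g : Matrix (Fin 2) (Fin 2) ℂ).det ≠ 0 :=
    ((isUnit_iff_isUnit_det _).1 g.isUnit).ne_zero
  obtain ⟨l, hl⟩ := IsAlgClosed.exists_pow_nat_eq (g : Matrix (Fin 2) (Fin 2) ℂ).det two_pos
  have hl0 : l ≠ 0 := by
    rintro rfl
    exact hdet (by simp [← hl])
  refine ⟨(Units.mk0 l hl0, ⟨l⁻¹ • (g : Matrix (Fin 2) (Fin 2) ℂ), ?_⟩), Units.ext ?_⟩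
  · rw [det_smul, Fintype.card_fin, inv_pow, hl, inv_mul_cancel₀ hdet]
  · rw [coe_mu]
    exact smul_inv_smul₀ hl0 _

theorem mu_eq_one_iff {p : ℂˣ × SpecialLinearGroup (Fin 2) ℂ} : mu p = 1 ↔ p = 1 ∨ p = -1 := by
  constructor
  · intro h
    have hsmul : (p.1 : ℂ) • (p.2 : Matrix (Fin 2) (Fin 2) ℂ) = 1 := by rw [← coe_mu, h]; rfl
    have hsq : (p.1 : ℂ) * p.1 = 1 := by simpa [det_smul, sq] using congrArg det hsmul
    rcases mul_self_eq_one_iff.1 hsq with ha | ha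
    · exact .inl (Prod.ext (Units.ext ha) (Subtype.ext (by simpa [ha] using hsmul)))
    · refine .inr (Prod.ext (Units.ext (by simpa using ha)) (Subtype.ext ?_))
      simpa [ha, neg_eq_iff_eq_neg] using hsmul
  · rintro (rfl | rfl)
    · exact map_one mu
    · ext : 1
      simp [coe_mu]

theorem IsConj.fst_eq {A B : Type*} [CommMonoid A] [Monoid B] {x y : A × B} (h : IsConj x y) :
    x.1 = y.1 :=
  isConj_iff_eq.1 ((MonoidHom.fst A B).map_isConj h)

theorem not_isConj_neg_one_mul (x : ℂˣ × SpecialLinearGroup (Fin 2) ℂ) : ¬IsConj (-1 * x) x :=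
  fun h => by simpa [Units.ext_iff, neg_eq_self] using h.fst_eq

theorem conjClasses_card_preimage_eq_two_mul_general
    (G : Subgroup (GL (Fin 2) ℂ)) :
    Nat.card (ConjClasses ↥(Subgroup.comap mu G))
      = 2 * Nat.card (ConjClasses ↥G) :=
  Nat.card_conjClasses_comap_eq_two_mul mu_surjective (fun _ => mu_eq_one_iff)
    not_isConj_neg_one_mul G

/-- For a finite subgroup `G ⊂ GL(2, ℂ)` and `G̃ = μ⁻¹(G)`,
the number of conjugacy classes of `G̃` is twice the number of conjugacy
classes of `G`. -/
theorem conjClasses_card_preimage_eq_two_mul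
    (G : Subgroup (GL (Fin 2) ℂ)) (hGfin : (G : Set (GL (Fin 2) ℂ)).Finite) :
    Nat.card (ConjClasses ↥(Subgroup.comap mu G))
      = 2 * Nat.card (ConjClasses ↥G) :=
  conjClasses_card_preimage_eq_two_mul_general G
end

section
/- Let H be a finite non-abelian subgroup of SL(2, ℂ) with −I ∈ H, acting on the set of lines in ℂ². Let L₁, L₂, L₃ be representatives of the three H-orbits of lines whose stabilizer in H strictly contains {I, −I}. Then |Stab_H(L₁)| + |Stab_H(L₂)| + |Stab_H(L₃)| = 2·(c(H) + 1), where Stab_H(L) = {h ∈ H : h(L) = L} and c(H) is the number of conjugacy classes of H. -/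
open Matrix

/-- The image `h(L)` of a subspace `L ⊆ ℂ²` under `h ∈ SL(2, ℂ)`. -/
noncomputable def lineImageSL (h : Matrix.SpecialLinearGroup (Fin 2) ℂ)
    (L : Submodule ℂ (Fin 2 → ℂ)) : Submodule ℂ (Fin 2 → ℂ) :=
  L.map (Matrix.mulVecLin (h : Matrix (Fin 2) (Fin 2) ℂ))

/-- The setwise stabilizer `{h ∈ H : h(L) = L}` of a subspace `L`. -/
def lineStabSetSL (H : Subgroup (Matrix.SpecialLinearGroup (Fin 2) ℂ))
    (L : Submodule ℂ (Fin 2 → ℂ)) : Set (Matrix.SpecialLinearGroup (Fin 2) ℂ) :=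
  {h | h ∈ H ∧ lineImageSL h L = L}

/-- Two subspaces lie in the same `H`-orbit. -/
def sameHOrbit (H : Subgroup (Matrix.SpecialLinearGroup (Fin 2) ℂ))
    (L L' : Submodule ℂ (Fin 2 → ℂ)) : Prop :=
  ∃ h ∈ H, lineImageSL h L = L'

/-!
Double counting. Let `X` be the union of the three orbits and weight `L ∈ X` by `|Stab_H(L)|`.
Counting the pairs `(h, L)` with `h(L) = L` line by line, each orbit contributes
`|H| · |Stab_H(Lᵢ)|`. Counting them element by element, `±I` fix all of `X`, which has total weight
`3|H|`. Any other `h ∈ H` has finite order, so its two eigenvalues are distinct: `h` fixes exactly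
two lines, both in `X`, and the stabilizer of each is the centralizer of `h` (stabilizers of lines
are abelian, since a finite-order element of `SL(2)` fixing a nonzero vector is `I`). Finally
`∑_{h ∈ H} |C_H(h)| = c(H) · |H|`.
-/

open Module MulAction Pointwise
open scoped MatrixGroups

section LinearAction

variable {K M G : Type*} [Field K] [AddCommGroup M] [Module K M] [Group G]
  [DistribMulAction G M] [SMulCommClass G K M]

theorem Submodule.exists_eq_span_singleton_of_finrank_eq_one {L : Submodule K M}
    (hL : finrank K L = 1) : ∃ v ≠ 0, L = K ∙ v := by
  obtain ⟨v, hvL, hv⟩ := (Submodule.ne_bot_iff L).mp fun h => by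
    rw [h, finrank_bot] at hL
    exact zero_ne_one hL
  exact ⟨v, hv, eq_span_singleton_of_mem_of_finrank_eq_one hL hvL hv⟩

theorem Submodule.finrank_pointwise_smul (g : G) (L : Submodule K M) :
    finrank K ↥(g • L) = finrank K L :=
  LinearEquiv.finrank_map_eq (DistribMulAction.toLinearEquiv K M g) L

theorem Submodule.smul_span_singleton_eq_self_iff {g : G} {v : M} (hv : v ≠ 0) :
    g • (K ∙ v) = K ∙ v ↔ ∃ ν : K, g • v = ν • v := by
  rw [Submodule.smul_span, Set.smul_set_singleton]
  constructor
  · intro h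
    obtain ⟨ν, hν⟩ := Submodule.mem_span_singleton.mp (h ▸ mem_span_singleton_self (g • v))
    exact ⟨ν, hν.symm⟩
  · rintro ⟨ν, hν⟩
    have hν0 : ν ≠ 0 := by
      rintro rfl
      rw [zero_smul, smul_eq_zero_iff_eq] at hν
      exact hv hν
    rw [hν, Submodule.span_singleton_smul_eq (IsUnit.mk0 ν hν0)]

variable (K M) in
abbrev eigenspaceOf (g : G) (ν : K) : Submodule K M :=
  End.eigenspace (DistribSMul.toLinearMap K M g) ν

theorem mem_eigenspaceOf {g : G} {ν : K} {v : M} :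
    v ∈ eigenspaceOf K M g ν ↔ g • v = ν • v :=
  End.mem_eigenspace_iff

theorem smul_eq_self_iff_exists_le_eigenspaceOf {g : G} {L : Submodule K M}
    (hL : finrank K L = 1) : g • L = L ↔ ∃ ν, L ≤ eigenspaceOf K M g ν := by
  obtain ⟨v, hv, rfl⟩ := Submodule.exists_eq_span_singleton_of_finrank_eq_one hL
  simp only [Submodule.smul_span_singleton_eq_self_iff hv, Submodule.span_singleton_le_iff_mem,
    mem_eigenspaceOf]

theorem smul_eigenspaceOf_le_of_commute {g k : G} (hkg : Commute k g) (ν : K) :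
    k • eigenspaceOf K M g ν ≤ eigenspaceOf K M g ν := by
  rintro _ ⟨v, hv, rfl⟩
  rw [SetLike.mem_coe, mem_eigenspaceOf] at hv
  rw [mem_eigenspaceOf]
  show g • k • v = ν • k • v
  rw [← mul_smul, ← hkg.eq, mul_smul, hv, smul_comm]

theorem smul_eigenspaceOf_of_commute {g k : G} (hkg : Commute k g) (ν : K) :
    k • eigenspaceOf K M g ν = eigenspaceOf K M g ν := by
  refine le_antisymm (smul_eigenspaceOf_le_of_commute hkg ν) ?_
  calc eigenspaceOf K M g ν = k • k⁻¹ • eigenspaceOf K M g ν := (smul_inv_smul k _).symm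
    _ ≤ k • eigenspaceOf K M g ν :=
      Submodule.map_mono (smul_eigenspaceOf_le_of_commute hkg.inv_left ν)

end LinearAction

section Counting

variable {G α : Type*} [Group G] [MulAction G α]

theorem MulAction.card_stabilizer_eq_of_mem_orbit {a b : α} (h : b ∈ orbit G a) :
    Nat.card (stabilizer G b) = Nat.card (stabilizer G a) :=
  Nat.card_congr (stabilizerEquivStabilizerOfOrbitRel h).toEquiv

variable [Fintype G]

variable (G) in
noncomputable def MulAction.orbitFinset (a : α) : Finset α :=
  (Finite.finite_mulAction_orbit (M := G) a).toFinset

@[simp]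
theorem MulAction.mem_orbitFinset {a b : α} : b ∈ orbitFinset G a ↔ b ∈ orbit G a :=
  Set.Finite.mem_toFinset _

theorem sum_card_centralizer :
    ∑ g : G, Nat.card (Subgroup.centralizer {g}) = Nat.card (ConjClasses G) * Nat.card G := by
  classical
  rw [← card_comm_eq_card_conjClasses_mul_card, Nat.card_eq_fintype_card,
    Fintype.card_congr (Equiv.subtypeProdEquivSigmaSubtype fun a b : G => Commute a b),
    Fintype.card_sigma]
  refine Finset.sum_congr rfl fun g _ => ?_
  rw [← Nat.card_eq_fintype_card]
  exact Nat.card_congr (Equiv.subtypeEquivRight fun h => by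
    rw [Subgroup.mem_centralizer_singleton_iff]
    exact eq_comm)

theorem MulAction.sum_orbit_card_stabilizer_pow (a : α) (k : ℕ) :
    ∑ b ∈ orbitFinset G a, Nat.card (stabilizer G b) ^ (k + 1) =
      Nat.card G * Nat.card (stabilizer G a) ^ k := by
  rw [Finset.sum_congr rfl fun b hb => by
      rw [card_stabilizer_eq_of_mem_orbit (mem_orbitFinset.mp hb)],
    Finset.sum_const, smul_eq_mul, orbitFinset,
    ← Set.ncard_eq_toFinset_card _ (Finite.finite_mulAction_orbit a), ← index_stabilizer,
    ← (stabilizer G a).index_mul_card, pow_succ', mul_assoc]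

variable [DecidableEq α]

theorem sum_card_stabilizer_sq_eq_sum_fixed (X : Finset α) :
    ∑ x ∈ X, Nat.card (stabilizer G x) ^ 2 =
      ∑ g : G, ∑ x ∈ X with g • x = x, Nat.card (stabilizer G x) := by
  simp_rw [Finset.sum_filter]
  rw [Finset.sum_comm]
  refine Finset.sum_congr rfl fun x _ => ?_
  rw [← Finset.sum_filter, Finset.sum_const, smul_eq_mul, sq, Nat.card_eq_fintype_card,
    Fintype.card_subtype]
  rfl

theorem sum_card_stabilizer_sq_add_four_mul_card (X : Finset α) {z : G}
    (hz : z ∈ Subgroup.center G) (hz1 : z ≠ 1) (hzX : ∀ x ∈ X, z • x = x)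
    (hfix : ∀ g : G, g ≠ 1 → g ≠ z → ∃ p q, p ≠ q ∧ {x ∈ X | g • x = x} = {p, q} ∧
      stabilizer G p = Subgroup.centralizer {g} ∧ stabilizer G q = Subgroup.centralizer {g}) :
    ∑ x ∈ X, Nat.card (stabilizer G x) ^ 2 + 4 * Nat.card G =
      2 * (Nat.card (ConjClasses G) * Nat.card G) + 2 * ∑ x ∈ X, Nat.card (stabilizer G x) := by
  classical
  set S := ∑ x ∈ X, Nat.card (stabilizer G x)
  have hcentral : ∀ g ∈ ({1, z} : Finset G), g ∈ Subgroup.center G := by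
    simp only [Finset.mem_insert, Finset.mem_singleton]
    rintro g (rfl | rfl)
    exacts [Subgroup.one_mem _, hz]
  have hfix_central : ∀ g ∈ ({1, z} : Finset G),
      ∑ x ∈ X with g • x = x, Nat.card (stabilizer G x) = S := by
    refine fun g hg => congrArg (Finset.sum · _) (Finset.filter_true_of_mem fun x hx => ?_)
    rcases Finset.mem_insert.mp hg with rfl | hg
    · exact one_smul G x
    · exact Finset.mem_singleton.mp hg ▸ hzX x hx
  have hcentralizer : ∀ g ∈ ({1, z} : Finset G),
      Nat.card (Subgroup.centralizer {g}) = Nat.card G := fun g hg => by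
    rw [Subgroup.centralizer_eq_top_iff_subset.mpr
      (Set.singleton_subset_iff.mpr (hcentral g hg)), Subgroup.card_top]
  have hfix_rest : ∀ g ∈ Finset.univ \ {1, z}, ∑ x ∈ X with g • x = x,
      Nat.card (stabilizer G x) = 2 * Nat.card (Subgroup.centralizer {g}) := by
    intro g hg
    simp only [Finset.mem_sdiff, Finset.mem_univ, Finset.mem_insert, Finset.mem_singleton,
      not_or, true_and] at hg
    obtain ⟨p, q, hpq, hX, hp, hq⟩ := hfix g hg.1 hg.2
    rw [hX, Finset.sum_pair hpq, hp, hq, two_mul]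
  rw [sum_card_stabilizer_sq_eq_sum_fixed, ← sum_card_centralizer, Finset.mul_sum,
    ← Finset.sum_sdiff (Finset.subset_univ {1, z}),
    ← Finset.sum_sdiff (Finset.subset_univ {1, z}) (f := fun g => 2 * _),
    Finset.sum_congr rfl hfix_rest, Finset.sum_congr rfl hfix_central,
    Finset.sum_congr rfl fun g hg => congrArg _ (hcentralizer g hg),
    Finset.sum_const, Finset.sum_const, Finset.card_pair hz1.symm]
  simp only [smul_eq_mul]
  ring

theorem sum_card_stabilizer_reps_add_four {ι : Type*} [Fintype ι] (a : ι → α)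
    (ha : ∀ i j, a j ∈ orbit G (a i) → i = j) {z : G} (hz : z ∈ Subgroup.center G)
    (hz1 : z ≠ 1) (hza : ∀ i, z • a i = a i)
    (hfix : ∀ g : G, g ≠ 1 → g ≠ z → ∃ p q, p ≠ q ∧
      {x ∈ Finset.univ.biUnion (fun i => orbitFinset G (a i)) | g • x = x} = {p, q} ∧
      stabilizer G p = Subgroup.centralizer {g} ∧ stabilizer G q = Subgroup.centralizer {g}) :
    ∑ i, Nat.card (stabilizer G (a i)) + 4 =
      2 * Nat.card (ConjClasses G) + 2 * Fintype.card ι := by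
  have hdisj : ((Finset.univ : Finset ι) : Set ι).PairwiseDisjoint
      fun i => orbitFinset G (a i) := by
    intro i _ j _ hij
    refine Finset.disjoint_left.mpr fun x hi hj => hij (ha i j ?_)
    rw [mem_orbitFinset] at hi hj
    exact orbit_eq_iff.mp ((orbit_eq_iff.mpr hj).symm.trans (orbit_eq_iff.mpr hi))
  have hzX : ∀ x ∈ Finset.univ.biUnion (fun i => orbitFinset G (a i)), z • x = x := by
    simp only [Finset.mem_biUnion, Finset.mem_univ, true_and, mem_orbitFinset]
    rintro _ ⟨i, g, rfl⟩
    show z • g • a i = g • a i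
    rw [smul_smul, ← Subgroup.mem_center_iff.mp hz g, mul_smul, hza]
  have key := sum_card_stabilizer_sq_add_four_mul_card _ hz hz1 hzX hfix
  have horbit₀ := fun i => sum_orbit_card_stabilizer_pow (G := G) (a i) 0
  have horbit₁ := fun i => sum_orbit_card_stabilizer_pow (G := G) (a i) 1
  simp only [zero_add, pow_one, pow_zero, mul_one] at horbit₀ horbit₁
  rw [Finset.sum_biUnion hdisj, Finset.sum_biUnion hdisj,
    Finset.sum_congr rfl fun i _ => horbit₀ i, Finset.sum_congr rfl fun i _ => horbit₁ i,
    ← Finset.mul_sum, Finset.sum_const, Finset.card_univ, smul_eq_mul] at key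
  refine Nat.eq_of_mul_eq_mul_left (Nat.card_pos (α := G)) ?_
  linear_combination key

end Counting

section SL2

theorem exists_roots_of_sq_ne_four {K : Type*} [Field K] [IsAlgClosed K] [NeZero (2 : K)]
    {t : K} (ht : t ^ 2 ≠ 4) :
    ∃ a b : K, a ≠ b ∧ ∀ ν, ν ^ 2 - t * ν + 1 = 0 ↔ ν = a ∨ ν = b := by
  obtain ⟨s, hs⟩ := IsAlgClosed.exists_eq_mul_self (discrim 1 (-t) 1)
  have hs0 : s ≠ 0 := by
    rintro rfl
    exact ht (by simp [discrim] at hs; linear_combination hs)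
  refine ⟨(t + s) / 2, (t - s) / 2, ?_, fun ν => ?_⟩
  · intro h
    field_simp at h
    have h2 : (2 : K) * s = 0 := by linear_combination h
    exact hs0 ((mul_eq_zero.mp h2).resolve_left two_ne_zero)
  · have := quadratic_eq_zero_iff one_ne_zero hs ν
    simp only [neg_neg, mul_one, one_mul] at this
    rw [← this]
    constructor <;> intro h <;> linear_combination h

variable {K : Type*} [Field K] {g : SL(2, K)}

namespace Matrix.SpecialLinearGroup

theorem eigenspaceOf_ne_bot_iff (ν : K) :
    eigenspaceOf K (Fin 2 → K) g ν ≠ ⊥ ↔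
      ν ^ 2 - (g : Matrix (Fin 2) (Fin 2) K).trace * ν + 1 = 0 := by
  have hchar : ((g : Matrix (Fin 2) (Fin 2) K) - ν • 1).det =
      ν ^ 2 - (g : Matrix (Fin 2) (Fin 2) K).trace * ν + 1 := by
    have hdet := g.det_coe
    rw [det_fin_two] at hdet
    simp only [det_fin_two, trace_fin_two, sub_apply, smul_apply, one_apply_eq,
      one_apply_ne Fin.zero_ne_one, one_apply_ne Fin.zero_ne_one.symm, smul_eq_mul]
    linear_combination hdet
  rw [← hchar, ← exists_mulVec_eq_zero_iff, Submodule.ne_bot_iff]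
  refine exists_congr fun v => ?_
  rw [mem_eigenspaceOf, sub_mulVec, sub_eq_zero, smul_mulVec, one_mulVec, and_comm]
  rfl

theorem eq_one_or_eq_neg_one_of_coe_eq_smul_one {a : K}
    (h : (g : Matrix (Fin 2) (Fin 2) K) = a • 1) : g = 1 ∨ g = -1 := by
  have ha : a = 1 ∨ a = -1 := by simpa [h, det_fin_two] using g.det_coe
  rcases ha with rfl | rfl
  · exact .inl (Subtype.ext (by rw [h, one_smul, coe_one]))
  · exact .inr (Subtype.ext (by rw [h, neg_one_smul, coe_neg, coe_one]))

theorem eigenspaceOf_ne_top (h1 : g ≠ 1) (hm1 : g ≠ -1) (ν : K) :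
    eigenspaceOf K (Fin 2 → K) g ν ≠ ⊤ := by
  intro h
  refine (eq_one_or_eq_neg_one_of_coe_eq_smul_one (a := ν)
    (ext_of_mulVec_single fun i => ?_)).elim h1 hm1
  rw [smul_mulVec, one_mulVec]
  exact mem_eigenspaceOf.mp (h ▸ Submodule.mem_top)

theorem finrank_eigenspaceOf_le_one (h1 : g ≠ 1) (hm1 : g ≠ -1) (ν : K) :
    finrank K (eigenspaceOf K (Fin 2 → K) g ν) ≤ 1 := by
  have := Submodule.finrank_lt (eigenspaceOf_ne_top h1 hm1 ν)
  rw [finrank_fin_fun] at this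
  omega

theorem smul_eq_self_iff_exists_eq_eigenspaceOf (h1 : g ≠ 1) (hm1 : g ≠ -1)
    {L : Submodule K (Fin 2 → K)} (hL : finrank K L = 1) :
    g • L = L ↔ ∃ ν, L = eigenspaceOf K (Fin 2 → K) g ν := by
  rw [smul_eq_self_iff_exists_le_eigenspaceOf hL]
  refine exists_congr fun ν => ⟨fun hle => Submodule.eq_of_le_of_finrank_le hle ?_, le_of_eq⟩
  rw [hL]
  exact finrank_eigenspaceOf_le_one h1 hm1 ν

theorem neg_one_smul_eq_neg (v : Fin 2 → K) : (-1 : SL(2, K)) • v = -v := by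
  ext i
  fin_cases i <;> simp [SpecialLinearGroup.smul_def]

theorem neg_one_smul_submodule (L : Submodule K (Fin 2 → K)) : (-1 : SL(2, K)) • L = L := by
  show L.map (DistribSMul.toLinearMap K (Fin 2 → K) (-1 : SL(2, K))) = L
  rw [show DistribSMul.toLinearMap K (Fin 2 → K) (-1 : SL(2, K)) = -LinearMap.id from
    LinearMap.ext neg_one_smul_eq_neg, Submodule.map_neg, Submodule.map_id]

variable [CharZero K]

theorem neg_one_ne_one : (-1 : SL(2, K)) ≠ 1 := fun h => by
  have := congrArg (fun g : SL(2, K) => (g : Matrix (Fin 2) (Fin 2) K) 0 0) h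
  norm_num at this

/-- A non-scalar `g` with `tr² = 4` is parabolic, and nonzero powers of parabolic elements are
parabolic, hence never `1`. -/
theorem sq_trace_ne_four (hg : IsOfFinOrder g) (h1 : g ≠ 1) (hm1 : g ≠ -1) :
    (g : Matrix (Fin 2) (Fin 2) K).trace ^ 2 ≠ 4 := by
  intro htr
  obtain ⟨n, hn, hgn⟩ := hg.exists_pow_eq_one
  have hpar : (toGL g).IsParabolic := by
    refine ⟨?_, by simp [discr_fin_two, htr]⟩
    rintro ⟨a, ha⟩
    refine (eq_one_or_eq_neg_one_of_coe_eq_smul_one (a := a) ?_).elim h1 hm1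
    simpa [smul_one_eq_diagonal] using ha.symm
  have := hpar.pow hn.ne'
  rw [← map_pow, hgn, map_one] at this
  exact this.1 ⟨1, by simp⟩

theorem eq_one_of_smul_eq_self (hg : IsOfFinOrder g) {v : Fin 2 → K} (hv : v ≠ 0)
    (h : g • v = v) : g = 1 := by
  by_contra h1
  have hm1 : g ≠ -1 := by
    rintro rfl
    have h2 : (2 : K) • v = 0 := by
      rw [two_smul]
      nth_rewrite 1 [← h, neg_one_smul_eq_neg]
      exact neg_add_cancel v
    exact hv ((smul_eq_zero.mp h2).resolve_left two_ne_zero)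
  have hroot := (eigenspaceOf_ne_bot_iff (g := g) 1).mp
    ((Submodule.ne_bot_iff _).mpr ⟨v, mem_eigenspaceOf.mpr (by rwa [one_smul]), hv⟩)
  refine sq_trace_ne_four hg h1 hm1 ?_
  linear_combination (-(g : Matrix (Fin 2) (Fin 2) K).trace - 2) * hroot

theorem commute_of_mem_stabilizer (H : Subgroup SL(2, K)) [Finite H]
    {L : Submodule K (Fin 2 → K)} (hL : finrank K L = 1) {k k' : H}
    (hk : k ∈ stabilizer H L) (hk' : k' ∈ stabilizer H L) : Commute k k' := by
  obtain ⟨v, hv, rfl⟩ := Submodule.exists_eq_span_singleton_of_finrank_eq_one hL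
  obtain ⟨a, ha⟩ := (Submodule.smul_span_singleton_eq_self_iff (g := (k : SL(2, K))) hv).mp hk
  obtain ⟨b, hb⟩ := (Submodule.smul_span_singleton_eq_self_iff (g := (k' : SL(2, K))) hv).mp hk'
  have hswap : ((k * k' : H) : SL(2, K)) • v = ((k' * k : H) : SL(2, K)) • v := by
    rw [Subgroup.coe_mul, Subgroup.coe_mul, mul_smul, mul_smul, hb, ha, smul_comm _ b v,
      smul_comm _ a v, ha, hb, smul_comm a b v]
  have hfix : (((k' * k)⁻¹ * (k * k') : H) : SL(2, K)) • v = v := by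
    rw [Subgroup.coe_mul, mul_smul, Subgroup.coe_inv, inv_smul_eq_iff]
    exact hswap
  have hc := eq_one_of_smul_eq_self
    (H.subtype.isOfFinOrder (isOfFinOrder_of_finite ((k' * k)⁻¹ * (k * k')))) hv hfix
  exact (inv_mul_eq_one.mp (Subtype.ext hc)).symm

theorem stabilizer_eq_centralizer (H : Subgroup SL(2, K)) [Finite H] {g : H}
    (h1 : (g : SL(2, K)) ≠ 1) (hm1 : (g : SL(2, K)) ≠ -1) {L : Submodule K (Fin 2 → K)}
    (hL : finrank K L = 1) (hgL : g • L = L) : stabilizer H L = Subgroup.centralizer {g} := by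
  ext k
  rw [Subgroup.mem_centralizer_singleton_iff]
  refine ⟨fun hk => (commute_of_mem_stabilizer H hL hk hgL).eq, fun hkg => ?_⟩
  obtain ⟨ν, rfl⟩ := (smul_eq_self_iff_exists_eq_eigenspaceOf h1 hm1 hL).mp hgL
  exact smul_eigenspaceOf_of_commute (congrArg Subtype.val hkg) ν

theorem exists_fixed_lines [IsAlgClosed K] (hg : IsOfFinOrder g) (h1 : g ≠ 1) (hm1 : g ≠ -1) :
    ∃ P Q : Submodule K (Fin 2 → K), P ≠ Q ∧
      {L : Submodule K (Fin 2 → K) | finrank K L = 1 ∧ g • L = L} = {P, Q} := by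
  obtain ⟨a, b, hab, hroots⟩ := exists_roots_of_sq_ne_four (sq_trace_ne_four hg h1 hm1)
  have hline : ∀ ν, ν = a ∨ ν = b → finrank K (eigenspaceOf K (Fin 2 → K) g ν) = 1 :=
    fun ν hν => le_antisymm (finrank_eigenspaceOf_le_one h1 hm1 ν)
      (Submodule.one_le_finrank_iff.mpr ((eigenspaceOf_ne_bot_iff ν).mpr ((hroots ν).mpr hν)))
  have hfixed : ∀ ν, ν = a ∨ ν = b →
      g • eigenspaceOf K (Fin 2 → K) g ν = eigenspaceOf K _ g ν :=
    fun ν hν => (smul_eq_self_iff_exists_eq_eigenspaceOf h1 hm1 (hline ν hν)).mpr ⟨ν, rfl⟩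
  refine ⟨eigenspaceOf K _ g a, eigenspaceOf K _ g b, fun h => hab ?_, ?_⟩
  · obtain ⟨v, hv, hv0⟩ := (Submodule.ne_bot_iff _).mp
      ((eigenspaceOf_ne_bot_iff a).mpr ((hroots a).mpr (.inl rfl)))
    have hvb := h ▸ hv
    rw [mem_eigenspaceOf] at hv hvb
    exact smul_left_injective K hv0 (hv.symm.trans hvb)
  ext L
  simp only [Set.mem_ofPred_eq, Set.mem_insert_iff, Set.mem_singleton_iff]
  constructor
  · rintro ⟨hL, hgL⟩
    obtain ⟨ν, rfl⟩ := (smul_eq_self_iff_exists_eq_eigenspaceOf h1 hm1 hL).mp hgL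
    have hν := (eigenspaceOf_ne_bot_iff ν).mp (Submodule.one_le_finrank_iff.mp hL.ge)
    rcases (hroots ν).mp hν with rfl | rfl
    exacts [.inl rfl, .inr rfl]
  · rintro (rfl | rfl)
    exacts [⟨hline a (.inl rfl), hfixed a (.inl rfl)⟩, ⟨hline b (.inr rfl), hfixed b (.inr rfl)⟩]

theorem exists_fixed_lines_in_finset (H : Subgroup SL(2, K)) [Finite H] [IsAlgClosed K]
    (X : Finset (Submodule K (Fin 2 → K))) (hX : ∀ L ∈ X, finrank K L = 1)
    {g : H} (h1 : (g : SL(2, K)) ≠ 1) (hm1 : (g : SL(2, K)) ≠ -1)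
    (hXfix : ∀ L : Submodule K (Fin 2 → K), finrank K L = 1 → g • L = L → L ∈ X) :
    ∃ P Q, P ≠ Q ∧ {L ∈ X | g • L = L} = {P, Q} ∧
      stabilizer H P = Subgroup.centralizer {g} ∧ stabilizer H Q = Subgroup.centralizer {g} := by
  obtain ⟨P, Q, hPQ, hset⟩ :=
    exists_fixed_lines (H.subtype.isOfFinOrder (isOfFinOrder_of_finite g)) h1 hm1
  rw [Set.ext_iff] at hset
  have hP : finrank K P = 1 ∧ g • P = P := (hset P).mpr (.inl rfl)
  have hQ : finrank K Q = 1 ∧ g • Q = Q := (hset Q).mpr (.inr rfl)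
  refine ⟨P, Q, hPQ, ?_, stabilizer_eq_centralizer H h1 hm1 hP.1 hP.2,
    stabilizer_eq_centralizer H h1 hm1 hQ.1 hQ.2⟩
  ext L
  simp only [Finset.mem_filter, Finset.mem_insert, Finset.mem_singleton]
  constructor
  · rintro ⟨hLX, hgL⟩
    exact (hset L).mp ⟨hX L hLX, hgL⟩
  · rintro (rfl | rfl)
    exacts [⟨hXfix _ hP.1 hP.2, hP.2⟩, ⟨hXfix _ hQ.1 hQ.2, hQ.2⟩]

end Matrix.SpecialLinearGroup

end SL2

section Lines

variable (H : Subgroup SL(2, ℂ))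

theorem ncard_lineStabSetSL (L : Submodule ℂ (Fin 2 → ℂ)) :
    (lineStabSetSL H L).ncard = Nat.card (stabilizer H L) := by
  have : lineStabSetSL H L = Subtype.val '' (stabilizer H L : Set H) := by
    ext g
    constructor
    · rintro ⟨hg, hgL⟩
      exact ⟨⟨g, hg⟩, hgL, rfl⟩
    · rintro ⟨g, hgL, rfl⟩
      exact ⟨g.2, hgL⟩
  rw [this, Set.ncard_image_of_injective _ Subtype.val_injective, ← Nat.card_coe_set_eq]
  rfl

theorem sameHOrbit_iff {L L' : Submodule ℂ (Fin 2 → ℂ)} :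
    sameHOrbit H L L' ↔ L' ∈ orbit H L :=
  ⟨fun ⟨h, hH, e⟩ => ⟨⟨h, hH⟩, e⟩, fun ⟨h, e⟩ => ⟨h, h.2, e⟩⟩

theorem pair_ssubset_lineStabSetSL (hnegI : (-1 : SL(2, ℂ)) ∈ H) {g : H}
    (h1 : (g : SL(2, ℂ)) ≠ 1) (hm1 : (g : SL(2, ℂ)) ≠ -1) {L : Submodule ℂ (Fin 2 → ℂ)}
    (hgL : g • L = L) : ({1, -1} : Set SL(2, ℂ)) ⊂ lineStabSetSL H L := by
  refine Set.ssubset_iff_subset_ne.mpr ⟨?_, fun h => ?_⟩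
  · rintro _ (rfl | rfl)
    exacts [⟨H.one_mem, one_smul SL(2, ℂ) L⟩,
      ⟨hnegI, SpecialLinearGroup.neg_one_smul_submodule L⟩]
  · have : (g : SL(2, ℂ)) ∈ ({1, -1} : Set SL(2, ℂ)) := h ▸ ⟨g.2, hgL⟩
    rcases this with h | h
    exacts [h1 h, hm1 h]

end Lines

theorem mckay_stabilizer_count_SL_general
    (H : Subgroup (Matrix.SpecialLinearGroup (Fin 2) ℂ))
    (hHfin : (H : Set (Matrix.SpecialLinearGroup (Fin 2) ℂ)).Finite)
    (hnegI : (-1 : Matrix.SpecialLinearGroup (Fin 2) ℂ) ∈ H)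
    (L₁ L₂ L₃ : Submodule ℂ (Fin 2 → ℂ))
    (hL₁ : Module.finrank ℂ L₁ = 1) (hL₂ : Module.finrank ℂ L₂ = 1)
    (hL₃ : Module.finrank ℂ L₃ = 1)
    (hd₁₂ : ¬ sameHOrbit H L₁ L₂) (hd₁₃ : ¬ sameHOrbit H L₁ L₃)
    (hd₂₃ : ¬ sameHOrbit H L₂ L₃)
    (hrep : ∀ L : Submodule ℂ (Fin 2 → ℂ), Module.finrank ℂ L = 1 →
      ({1, -1} : Set (Matrix.SpecialLinearGroup (Fin 2) ℂ)) ⊂ lineStabSetSL H L →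
      sameHOrbit H L L₁ ∨ sameHOrbit H L L₂ ∨ sameHOrbit H L L₃) :
    (lineStabSetSL H L₁).ncard + (lineStabSetSL H L₂).ncard
        + (lineStabSetSL H L₃).ncard
      = 2 * (Nat.card (ConjClasses ↥H) + 1) := by
  have : Fintype H := hHfin.fintype
  let L : Fin 3 → Submodule ℂ (Fin 2 → ℂ) := ![L₁, L₂, L₃]
  let X := Finset.univ.biUnion fun i => orbitFinset H (L i)
  have hdistinct : ∀ i j, L j ∈ orbit H (L i) → i = j := by
    intro i j h
    fin_cases i <;> fin_cases j <;> simp_all [L, ← sameHOrbit_iff, mem_orbit_symm]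
  have hlines : ∀ L' ∈ X, finrank ℂ L' = 1 := by
    simp only [X, Finset.mem_biUnion, Finset.mem_univ, true_and, mem_orbitFinset]
    rintro _ ⟨i, g, rfl⟩
    show finrank ℂ ↥((g : SL(2, ℂ)) • L i) = 1
    rw [Submodule.finrank_pointwise_smul]
    fin_cases i <;> assumption
  have hcover : ∀ g : H, (g : SL(2, ℂ)) ≠ 1 → (g : SL(2, ℂ)) ≠ -1 →
      ∀ L' : Submodule ℂ (Fin 2 → ℂ), finrank ℂ L' = 1 → g • L' = L' → L' ∈ X := by
    intro g h1 hm1 L' hL' hgL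
    simpa [X, L, Fin.exists_fin_succ, sameHOrbit_iff, mem_orbit_symm] using
      hrep L' hL' (pair_ssubset_lineStabSetSL H hnegI h1 hm1 hgL)
  have key := sum_card_stabilizer_reps_add_four L hdistinct (z := ⟨-1, hnegI⟩)
    (Subgroup.mem_center_iff.mpr fun g => Subtype.ext (by simp))
    (fun h => SpecialLinearGroup.neg_one_ne_one (congrArg Subtype.val h))
    (fun i => SpecialLinearGroup.neg_one_smul_submodule (L i))
    fun g h1 hm1 => by
      have h1' : (g : SL(2, ℂ)) ≠ 1 := fun h => h1 (Subtype.ext h)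
      have hm1' : (g : SL(2, ℂ)) ≠ -1 := fun h => hm1 (Subtype.ext h)
      exact SpecialLinearGroup.exists_fixed_lines_in_finset H X hlines h1' hm1' (hcover g h1' hm1')
  simp only [Fin.sum_univ_three, Fintype.card_fin, L, Matrix.cons_val_zero, Matrix.cons_val_one,
    Matrix.cons_val_two, Matrix.head_cons, Matrix.tail_cons] at key
  rw [ncard_lineStabSetSL, ncard_lineStabSetSL, ncard_lineStabSetSL]
  omega

/-- Let `H ⊂ SL(2, ℂ)` be a finite non-abelian subgroup with
`-I ∈ H` and let `L₁, L₂, L₃` represent the three `H`-orbits of lines whose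
stabilizer strictly contains `{I, -I}`. Then
`|Stab_H(L₁)| + |Stab_H(L₂)| + |Stab_H(L₃)| = 2·(c(H) + 1)`, where `c(H)` is
the number of conjugacy classes of `H`. -/
theorem mckay_stabilizer_count_SL
    (H : Subgroup (Matrix.SpecialLinearGroup (Fin 2) ℂ))
    (hHfin : (H : Set (Matrix.SpecialLinearGroup (Fin 2) ℂ)).Finite)
    (hnab : ¬ ∀ a ∈ H, ∀ b ∈ H, a * b = b * a)
    (hnegI : (-1 : Matrix.SpecialLinearGroup (Fin 2) ℂ) ∈ H)
    (L₁ L₂ L₃ : Submodule ℂ (Fin 2 → ℂ))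
    (hL₁ : Module.finrank ℂ L₁ = 1) (hL₂ : Module.finrank ℂ L₂ = 1)
    (hL₃ : Module.finrank ℂ L₃ = 1)
    (hs₁ : ({1, -1} : Set (Matrix.SpecialLinearGroup (Fin 2) ℂ)) ⊂ lineStabSetSL H L₁)
    (hs₂ : ({1, -1} : Set (Matrix.SpecialLinearGroup (Fin 2) ℂ)) ⊂ lineStabSetSL H L₂)
    (hs₃ : ({1, -1} : Set (Matrix.SpecialLinearGroup (Fin 2) ℂ)) ⊂ lineStabSetSL H L₃)
    (hd₁₂ : ¬ sameHOrbit H L₁ L₂) (hd₁₃ : ¬ sameHOrbit H L₁ L₃)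
    (hd₂₃ : ¬ sameHOrbit H L₂ L₃)
    (hrep : ∀ L : Submodule ℂ (Fin 2 → ℂ), Module.finrank ℂ L = 1 →
      ({1, -1} : Set (Matrix.SpecialLinearGroup (Fin 2) ℂ)) ⊂ lineStabSetSL H L →
      sameHOrbit H L L₁ ∨ sameHOrbit H L L₂ ∨ sameHOrbit H L L₃) :
    (lineStabSetSL H L₁).ncard + (lineStabSetSL H L₂).ncard
        + (lineStabSetSL H L₃).ncard
      = 2 * (Nat.card (ConjClasses ↥H) + 1) :=
  mckay_stabilizer_count_SL_general H hHfin hnegI L₁ L₂ L₃ hL₁ hL₂ hL₃ hd₁₂ hd₁₃ hd₂₃ hrep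
end

section
/- Let G be a finite subgroup of GL(2, ℂ) that is small, i.e., no element g ∈ G with g ≠ I fixes a nonzero vector of ℂ². If G is non-abelian, then −I ∈ G. -/
open Matrix

/-!
Suppose `-I ∉ G`. An involution `g ≠ ±I` would fix the nonzero columns of `g + I`, so `G` has
no element of order two and `|G|` is odd.

A nonscalar element `x` of finite order is diagonalizable with two distinct eigenvalues. If
`y x y⁻¹` commutes with `x`, it is diagonal in the same eigenbasis, so `y` permutes the two
eigenlines of `x`; then `y²` commutes with `x`, and since `y` has odd order, so does `y`.

This commutation property makes every nilpotent subgroup of `G` abelian: an element `x` of the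
second centre satisfies `y x y⁻¹ = ⁅x, y⁆⁻¹ x`. The Sylow subgroups are therefore abelian, hence
simultaneously diagonalizable, and freeness makes the character on a common eigenvector
faithful, so they are cyclic. Thus `G` is a Z-group: its commutator subgroup is cyclic, hence
central by the commutation property, and its abelianization is cyclic, so `G` is abelian.
-/

theorem eq_zero_of_smul_one_add_pow_eq_one {K A : Type*} [Field K] [CharZero K] [Ring A]
    [Algebra K A] {N : A} (hN : N * N = 0) {c : K} {k : ℕ} (hk : k ≠ 0)
    (h : (c • 1 + N) ^ k = 1) : N = 0 := by
  have hpow : ∀ m : ℕ, (c • 1 + N) ^ (m + 1) = c ^ (m + 1) • 1 + ((m + 1) * c ^ m) • N := by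
    intro m
    induction m with
    | zero => simp
    | succ m ih =>
      rw [pow_succ, ih]
      simp only [add_mul, mul_add, smul_mul_assoc, mul_smul_comm, one_mul, mul_one, hN,
        smul_zero, add_zero]
      push_cast
      module
  obtain ⟨m, rfl⟩ := Nat.exists_eq_succ_of_ne_zero hk
  rw [hpow] at h
  by_contra hN0
  have hc : c ^ (m + 1) = 1 := by
    have hNN := congrArg (· * N) h
    simp only [add_mul, smul_mul_assoc, one_mul, hN, smul_zero, add_zero] at hNN
    have : (c ^ (m + 1) - 1) • N = 0 := by rw [sub_smul, one_smul, hNN, sub_self]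
    exact sub_eq_zero.mp ((smul_eq_zero.mp this).resolve_right hN0)
  rw [hc, one_smul, add_eq_left] at h
  have hc0 : c ≠ 0 := by
    rintro rfl
    simp at hc
  exact mul_ne_zero (Nat.cast_add_one_ne_zero m) (pow_ne_zero m hc0)
    ((smul_eq_zero.mp h).resolve_right hN0)

theorem Commute.of_sq_left {M : Type*} [Monoid M] {x y : M} {n : ℕ} (hn : Odd n) (hy : y ^ n = 1)
    (h : Commute (y ^ 2) x) : Commute y x := by
  obtain ⟨k, rfl⟩ := hn
  have hy' : y = (y ^ 2) ^ (k + 1) := by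
    rw [← pow_mul, show 2 * (k + 1) = 2 * k + 1 + 1 by ring, pow_succ, hy, one_mul]
  rw [hy']
  exact h.pow_left _

theorem isMulCommutative_of_isNilpotent_of_commute_conj {G : Type*} [Group G]
    [Group.IsNilpotent G] (hG : ∀ x y : G, Commute x (y * x * y⁻¹) → Commute y x) :
    IsMulCommutative G := by
  have hZ : Subgroup.upperCentralSeries G 1 = Subgroup.upperCentralSeries G 2 := by
    refine le_antisymm (Subgroup.upperCentralSeries_mono _ one_le_two) fun x hx => ?_
    rw [Subgroup.upperCentralSeries_one, Subgroup.mem_center_iff]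
    intro y
    have hc : x * y * x⁻¹ * y⁻¹ ∈ Subgroup.center G := by
      rw [← Subgroup.upperCentralSeries_one]
      exact Subgroup.mem_upperCentralSeries_succ_iff.mp hx y
    have hyx : y * x * y⁻¹ = (x * y * x⁻¹ * y⁻¹)⁻¹ * x := by group
    refine (hG x y ?_).eq
    rw [hyx]
    exact Commute.mul_right (Subgroup.mem_center_iff.mp (inv_mem hc) x) (Commute.refl x)
  have htop := Subgroup.upperCentralSeries.eq_top (by norm_num) hZ
  rw [Subgroup.upperCentralSeries_one] at htop
  exact isMulCommutative_iff.mpr fun a b =>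
    Subgroup.mem_center_iff.mp (htop ▸ Subgroup.mem_top b) a

theorem IsZGroup.isMulCommutative_of_commute_conj {G : Type*} [Group G] [Finite G] [IsZGroup G]
    (hG : ∀ x y : G, Commute x (y * x * y⁻¹) → Commute y x) : IsMulCommutative G := by
  obtain ⟨c, hc⟩ := (IsZGroup.isCyclic_commutator G).exists_generator
  have hc_center : (c : G) ∈ Subgroup.center G := by
    refine Subgroup.mem_center_iff.mpr fun y => (hG c y ?_).eq
    obtain ⟨k, hk⟩ := Subgroup.mem_zpowers_iff.mp
      (hc ⟨y * c * y⁻¹, Subgroup.Normal.conj_mem inferInstance (c : G) c.2 y⟩)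
    have hyc : y * c * y⁻¹ = (c : G) ^ k := by simpa using (congrArg Subtype.val hk).symm
    rw [hyc]
    exact (Commute.refl (c : G)).zpow_right k
  refine Abelianization.of.isMulCommutative_of_isCyclic_of_ker_le_center ?_
  rw [Abelianization.ker_of]
  intro g hg
  obtain ⟨k, hk⟩ := Subgroup.mem_zpowers_iff.mp (hc ⟨g, hg⟩)
  have hgk : g = (c : G) ^ k := by simpa using (congrArg Subtype.val hk).symm
  rw [hgk]
  exact Subgroup.zpow_mem _ hc_center k

namespace Matrix

section

variable {n K : Type*} [Fintype n] [DecidableEq n]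

theorem isDiag_of_commute_diagonal [CommRing K] [NoZeroDivisors K] {d : n → K}
    (hd : Function.Injective d) {B : Matrix n n K} (h : Commute B (diagonal d)) : B.IsDiag := by
  intro i j hij
  have hBij := congrFun (congrFun h.eq i) j
  rw [mul_diagonal, diagonal_mul] at hBij
  have : (d j - d i) * B i j = 0 := by linear_combination hBij
  exact (mul_eq_zero.mp this).resolve_left (sub_ne_zero.mpr (hd.ne (Ne.symm hij)))

theorem exists_mulVec_eq_smul_of_det_eq_zero [Field K] {A : Matrix n n K} {c : K}
    (h : (A - c • 1).det = 0) : ∃ v ≠ 0, A *ᵥ v = c • v := by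
  obtain ⟨v, hv, hAv⟩ := exists_mulVec_eq_zero_iff.mpr h
  refine ⟨v, hv, ?_⟩
  rwa [sub_mulVec, smul_mulVec, one_mulVec, sub_eq_zero] at hAv

end

variable {K : Type*} [Field K]

theorem eq_smul_one_of_pow_eq_one_of_trace_of_det [CharZero K] {A : Matrix (Fin 2) (Fin 2) K}
    {k : ℕ} (hk : k ≠ 0) (hA : A ^ k = 1) {μ : K} (htr : A.trace = 2 * μ)
    (hdet : A.det = μ * μ) : A = μ • 1 := by
  have hN : (A - μ • 1) * (A - μ • 1) = 0 := by
    have hCH : A * A - A.trace • A + A.det • (1 : Matrix (Fin 2) (Fin 2) K) = 0 := by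
      simpa [charpoly_fin_two, sq, Algebra.smul_def] using A.aeval_self_charpoly
    rw [← hCH, htr, hdet]
    simp only [sub_mul, mul_sub, smul_mul_assoc, mul_smul_comm, one_mul, mul_one]
    module
  have hAk : (μ • 1 + (A - μ • 1)) ^ k = 1 := by rwa [add_sub_cancel]
  exact sub_eq_zero.mp (eq_zero_of_smul_one_add_pow_eq_one hN hk hAk)

theorem exists_mul_eq_mul_diagonal {A : Matrix (Fin 2) (Fin 2) K} {μ ν : K} (hμν : μ ≠ ν)
    {v w : Fin 2 → K} (hv : v ≠ 0) (hw : w ≠ 0) (hAv : A *ᵥ v = μ • v) (hAw : A *ᵥ w = ν • w) :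
    ∃ S : GL (Fin 2) K, A * S = S * diagonal ![μ, ν] := by
  set S : Matrix (Fin 2) (Fin 2) K := of fun i j => ![v, w] j i
  have hS : IsUnit S := by
    refine linearIndependent_cols_iff_isUnit.mp ?_
    have hcol : S.col = ![v, w] := by
      ext j i
      fin_cases j <;> rfl
    rw [hcol, LinearIndependent.pair_iff]
    intro s t hst
    have hs : (s * (μ - ν)) • v = 0 := by
      have := congrArg (fun u => A *ᵥ u - ν • u) hst
      simp only [mulVec_add, mulVec_smul, hAv, hAw, mulVec_zero, smul_zero, sub_zero] at this
      rw [← this]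
      module
    obtain rfl : s = 0 := by simpa [hv, sub_eq_zero, hμν] using hs
    simpa [hw] using hst
  refine ⟨hS.unit, ?_⟩
  rw [hS.unit_spec]
  ext i j
  rw [mul_diagonal]
  fin_cases j
  · exact (congrFun hAv i).trans (mul_comm _ _)
  · exact (congrFun hAw i).trans (mul_comm _ _)

/-- Such a `Q` is diagonal or antidiagonal. -/
theorem isDiag_mul_self_of_mul_diagonal_eq {Q : Matrix (Fin 2) (Fin 2) K} (hQ : Q.det ≠ 0)
    {d e : Fin 2 → K} (hd : d 0 ≠ d 1) (h : Q * diagonal d = diagonal e * Q) :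
    (Q * Q).IsDiag := by
  have hrow : ∀ i, Q i 0 * Q i 1 = 0 := fun i => by
    have h0 := congrFun (congrFun h i) 0
    have h1 := congrFun (congrFun h i) 1
    simp only [mul_diagonal, diagonal_mul] at h0 h1
    have : Q i 0 * Q i 1 * (d 0 - d 1) = 0 := by linear_combination Q i 1 * h0 - Q i 0 * h1
    exact (mul_eq_zero.mp this).resolve_right (sub_ne_zero.mpr hd)
  rw [det_fin_two] at hQ
  have h01 : (Q * Q) 0 1 = 0 := by
    refine (mul_eq_zero.mp ?_).resolve_right hQ
    simp only [mul_apply, Fin.sum_univ_two]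
    linear_combination (Q 0 0 * Q 1 1 - Q 0 1 * Q 1 0 + Q 1 1 * Q 1 1) * hrow 0 -
      Q 0 1 * Q 0 1 * hrow 1
  have h10 : (Q * Q) 1 0 = 0 := by
    refine (mul_eq_zero.mp ?_).resolve_right hQ
    simp only [mul_apply, Fin.sum_univ_two]
    linear_combination (Q 0 0 * Q 1 1 - Q 0 1 * Q 1 0 + Q 0 0 * Q 0 0) * hrow 1 -
      Q 1 0 * Q 1 0 * hrow 0
  intro i j hij
  fin_cases i <;> fin_cases j <;> simp_all

namespace GeneralLinearGroup

theorem eq_neg_one_of_sq_eq_one {n R : Type*} [Fintype n] [DecidableEq n] [CommRing R]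
    {g : GL n R} (hg : g ^ 2 = 1) (hfix : ∀ v, (g : Matrix n n R) *ᵥ v = v → v = 0) :
    g = -1 := by
  have hg' : (g : Matrix n n R) * g = 1 := by rw [← Units.val_mul, ← sq, hg, Units.val_one]
  have hker : ∀ v, ((g : Matrix n n R) + 1) *ᵥ v = 0 := fun v => hfix _ (by
    rw [mulVec_mulVec, mul_add, hg', mul_one, add_comm])
  refine Units.ext ?_
  rw [Units.val_neg, Units.val_one, eq_neg_iff_add_eq_zero]
  exact ext_of_mulVec_single fun i => by rw [hker, zero_mulVec]

theorem commute_sq_of_commute_conj_of_val_eq_diagonal {x y : GL (Fin 2) K} {d : Fin 2 → K}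
    (hd : Function.Injective d) (hx : (x : Matrix (Fin 2) (Fin 2) K) = diagonal d)
    (h : Commute x (y * x * y⁻¹)) : Commute (y ^ 2) x := by
  obtain ⟨e, he⟩ : ∃ e, ((y * x * y⁻¹ : GL (Fin 2) K) : Matrix (Fin 2) (Fin 2) K) = diagonal e :=
    ⟨_, (isDiag_of_commute_diagonal hd (hx ▸ h.symm.units_val)).diagonal_diag.symm⟩
  have hyx : (y : Matrix (Fin 2) (Fin 2) K) * diagonal d = diagonal e * y := by
    rw [← hx, ← he]
    simp [mul_assoc]
  have hy2 := isDiag_mul_self_of_mul_diagonal_eq y.det_ne_zero (hd.ne (by decide)) hyx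
  refine Commute.units_of_val ?_
  rw [hx, Units.val_pow_eq_pow_val, sq, ← hy2.diagonal_diag]
  exact commute_diagonal _ _

variable [IsAlgClosed K] [CharZero K]

theorem exists_conj_eq_diagonal {x : GL (Fin 2) K} (hx : IsOfFinOrder x)
    (hxc : x ∉ Subgroup.center (GL (Fin 2) K)) :
    ∃ P : GL (Fin 2) K, ∃ d : Fin 2 → K, Function.Injective d ∧
      ((P⁻¹ * x * P : GL (Fin 2) K) : Matrix (Fin 2) (Fin 2) K) = diagonal d := by
  set A : Matrix (Fin 2) (Fin 2) K := x.val
  have hchar : ∀ c, (A - c • 1).det = c * c - A.trace * c + A.det := fun c => by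
    simp only [det_fin_two, trace_fin_two, Matrix.sub_apply, Matrix.smul_apply, one_apply_eq,
      one_apply_ne zero_ne_one, one_apply_ne one_ne_zero, smul_eq_mul]
    ring
  obtain ⟨μ, hμ⟩ : ∃ μ, μ * μ - A.trace * μ + A.det = 0 := by
    obtain ⟨μ, hμ⟩ := exists_quadratic_eq_zero one_ne_zero
      (IsAlgClosed.exists_eq_mul_self (discrim 1 (-A.trace) A.det))
    exact ⟨μ, by linear_combination hμ⟩
  set ν := A.trace - μ
  have hν : ν * ν - A.trace * ν + A.det = 0 := by linear_combination hμ
  by_cases hμν : μ = ν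
  · obtain ⟨k, hk, hxk⟩ := isOfFinOrder_iff_pow_eq_one.mp hx
    have hA : A = μ • 1 := eq_smul_one_of_pow_eq_one_of_trace_of_det hk.ne'
      (by rw [← Units.val_pow_eq_pow_val, hxk, Units.val_one])
      (by linear_combination -hμν) (by linear_combination hμ - μ * hμν)
    refine absurd (mem_center_iff_val_mem_range_scalar.mpr ⟨μ, ?_⟩) hxc
    rw [scalar_apply, ← smul_one_eq_diagonal]
    exact hA.symm
  obtain ⟨v, hv, hAv⟩ := exists_mulVec_eq_smul_of_det_eq_zero ((hchar μ).trans hμ)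
  obtain ⟨w, hw, hAw⟩ := exists_mulVec_eq_smul_of_det_eq_zero ((hchar ν).trans hν)
  obtain ⟨P, hAP⟩ := exists_mul_eq_mul_diagonal hμν hv hw hAv hAw
  refine ⟨P, ![μ, ν], ?_, ?_⟩
  · intro i j hij
    fin_cases i <;> fin_cases j <;> simp_all [eq_comm]
  · rw [Units.val_mul, Units.val_mul, mul_assoc, hAP, ← mul_assoc, Units.inv_mul, one_mul]

theorem commute_sq_of_commute_conj {x y : GL (Fin 2) K} (hx : IsOfFinOrder x)
    (h : Commute x (y * x * y⁻¹)) : Commute (y ^ 2) x := by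
  by_cases hxc : x ∈ Subgroup.center (GL (Fin 2) K)
  · exact Subgroup.mem_center_iff.mp hxc (y ^ 2)
  obtain ⟨P, d, hd, hPx⟩ := exists_conj_eq_diagonal hx hxc
  let φ := MulAut.conj P⁻¹
  have key := commute_sq_of_commute_conj_of_val_eq_diagonal (x := φ x) (y := φ y) hd
    (by simpa [φ] using hPx) (by simpa only [map_mul, map_inv] using h.map φ)
  rw [← map_pow] at key
  exact (commute_map_iff φ.injective).mp key

theorem exists_common_eigenvector {H : Type*} [Group H] [Finite H] [IsMulCommutative H]
    (ρ : H →* GL (Fin 2) K) :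
    ∃ u ≠ 0, ∀ h, ∃ c : K, (ρ h : Matrix (Fin 2) (Fin 2) K) *ᵥ u = c • u := by
  by_cases hsc : ∀ h, ρ h ∈ Subgroup.center (GL (Fin 2) K)
  · refine ⟨Pi.single 0 1, by simp, fun h => ?_⟩
    obtain ⟨c, hc⟩ := mem_center_iff_val_mem_range_scalar.mp (hsc h)
    exact ⟨c, by rw [← hc, scalar_apply, ← smul_one_eq_diagonal, smul_mulVec, one_mulVec]⟩
  push Not at hsc
  obtain ⟨a, ha⟩ := hsc
  obtain ⟨P, d, hd, hPa⟩ := exists_conj_eq_diagonal (ρ.isOfFinOrder (isOfFinOrder_of_finite a)) ha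
  refine ⟨(P : Matrix (Fin 2) (Fin 2) K) *ᵥ Pi.single 0 1, fun h0 => ?_, fun h => ?_⟩
  · have := congrArg (((P⁻¹ : GL (Fin 2) K) : Matrix (Fin 2) (Fin 2) K) *ᵥ ·) h0
    simp only [mulVec_mulVec, Units.inv_mul, one_mulVec, mulVec_zero] at this
    exact one_ne_zero (congrFun this 0)
  have hcomm : Commute (P⁻¹ * ρ h * P) (P⁻¹ * ρ a * P) := by
    simpa only [MulAut.conj_apply, inv_inv] using
      ((show Commute h a from isMulCommutative_iff.mp ‹_› h a).map ρ).map (MulAut.conj P⁻¹)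
  set D : Matrix (Fin 2) (Fin 2) K := (P⁻¹ * ρ h * P).val
  have hdiag : D.IsDiag := isDiag_of_commute_diagonal hd (hPa ▸ hcomm.units_val)
  have hPD : (ρ h : Matrix (Fin 2) (Fin 2) K) * P = P * D := by simp [D, ← mul_assoc]
  have hDs : D *ᵥ Pi.single 0 1 = D 0 0 • Pi.single 0 1 := by
    ext i
    fin_cases i
    · simp
    · simpa [mulVec_single_one] using hdiag (by decide : (1 : Fin 2) ≠ 0)
  exact ⟨D 0 0, by rw [mulVec_mulVec, hPD, ← mulVec_mulVec, hDs, mulVec_smul]⟩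

end GeneralLinearGroup

end Matrix

section ActsFreely

variable {H : Type*} [Group H] {n K : Type*} [Fintype n] [DecidableEq n]

def ActsFreely [CommRing K] (ρ : H →* GL n K) : Prop :=
  ∀ h, h ≠ 1 → ∀ v : n → K, v ≠ 0 → (ρ h : Matrix n n K) *ᵥ v ≠ v

theorem ActsFreely.comp [CommRing K] {ρ : H →* GL n K} (hρ : ActsFreely ρ) {H' : Type*}
    [Group H'] {f : H' →* H} (hf : Function.Injective f) : ActsFreely (ρ.comp f) :=
  fun h hh => hρ (f h) ((map_ne_one_iff f hf).mpr hh)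

theorem ActsFreely.injective [Nonempty n] [CommRing K] [Nontrivial K] {ρ : H →* GL n K}
    (hρ : ActsFreely ρ) : Function.Injective ρ := by
  refine (injective_iff_map_eq_one ρ).mpr fun h hh => ?_
  obtain ⟨v, hv⟩ := exists_ne (0 : n → K)
  by_contra h1
  exact hρ h h1 v hv (by rw [hh, Units.val_one, one_mulVec])

theorem odd_card_of_actsFreely [Finite H] [CommRing K] {ρ : H →* GL n K} (hρ : ActsFreely ρ)
    (hneg : (-1 : GL n K) ∉ ρ.range) : Odd (Nat.card H) := by
  by_contra heven
  have : Fact (Nat.Prime 2) := ⟨Nat.prime_two⟩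
  obtain ⟨h, hh⟩ := exists_prime_orderOf_dvd_card' 2
    (even_iff_two_dvd.mp (Nat.not_odd_iff_even.mp heven))
  refine hneg ⟨h, GeneralLinearGroup.eq_neg_one_of_sq_eq_one ?_ fun v hv => ?_⟩
  · rw [← map_pow, ← hh, pow_orderOf_eq_one, map_one]
  · by_contra hv0
    exact hρ h (by rintro rfl; simp at hh) v hv0 hv

theorem isCyclic_of_actsFreely_of_common_eigenvector [Finite H] [Field K] {ρ : H →* GL n K}
    (hρ : ActsFreely ρ) {u : n → K} (hu : u ≠ 0)
    (heig : ∀ h, ∃ c : K, (ρ h : Matrix n n K) *ᵥ u = c • u) : IsCyclic H := by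
  choose χ hχ using heig
  have hχ_unique : ∀ {h c}, (ρ h : Matrix n n K) *ᵥ u = c • u → χ h = c := fun hc =>
    smul_left_injective K hu ((hχ _).symm.trans hc)
  refine isCyclic_of_injective_ringHom
    { toFun := χ
      map_one' := hχ_unique (by rw [map_one, Units.val_one, one_mulVec, one_smul])
      map_mul' := fun h k => hχ_unique (by
        rw [map_mul, Units.val_mul, ← mulVec_mulVec, hχ, mulVec_smul, hχ, smul_smul, mul_comm]) }
    fun h k hhk => ?_
  have hhk' : (ρ h : Matrix n n K) *ᵥ u = (ρ k : Matrix n n K) *ᵥ u := by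
    rw [hχ, hχ]
    exact congrArg (· • u) hhk
  by_contra hne
  refine hρ (k⁻¹ * h) (by rwa [ne_eq, inv_mul_eq_one, eq_comm]) u hu ?_
  rw [map_mul, Units.val_mul, ← mulVec_mulVec, hhk', mulVec_mulVec, ← Units.val_mul, ← map_mul,
    inv_mul_cancel, map_one, Units.val_one, one_mulVec]

variable [Field K] [IsAlgClosed K] [CharZero K]

theorem commute_of_commute_conj_of_odd_card [Finite H] (hodd : Odd (Nat.card H))
    {ρ : H →* GL (Fin 2) K} (hρ : Function.Injective ρ) {x y : H}
    (h : Commute x (y * x * y⁻¹)) : Commute y x := by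
  refine (commute_map_iff hρ).mp (Commute.of_sq_left hodd ?_ ?_)
  · rw [← map_pow, pow_card_eq_one', map_one]
  · exact GeneralLinearGroup.commute_sq_of_commute_conj (ρ.isOfFinOrder (isOfFinOrder_of_finite x))
      (by simpa only [map_mul, map_inv] using h.map ρ)

theorem isMulCommutative_of_actsFreely [Finite H] {ρ : H →* GL (Fin 2) K} (hρ : ActsFreely ρ)
    (hneg : (-1 : GL (Fin 2) K) ∉ ρ.range) : IsMulCommutative H := by
  have hodd := odd_card_of_actsFreely hρ hneg
  have hconj : ∀ x y : H, Commute x (y * x * y⁻¹) → Commute y x := fun _ _ =>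
    commute_of_commute_conj_of_odd_card hodd hρ.injective
  have : IsZGroup H := ⟨fun p hp P => by
    have : Fact p.Prime := ⟨hp⟩
    have : Group.IsNilpotent P := P.isPGroup'.isNilpotent
    have : IsMulCommutative P := isMulCommutative_of_isNilpotent_of_commute_conj fun x y hxy =>
      (commute_map_iff (P : Subgroup H).subtype_injective).mp
        (hconj _ _ (by simpa using hxy.map (P : Subgroup H).subtype))
    obtain ⟨u, hu, heig⟩ :=
      GeneralLinearGroup.exists_common_eigenvector (ρ.comp (P : Subgroup H).subtype)
    exact isCyclic_of_actsFreely_of_common_eigenvector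
      (hρ.comp (P : Subgroup H).subtype_injective) hu heig⟩
  exact IsZGroup.isMulCommutative_of_commute_conj hconj

end ActsFreely

/-- A finite small subgroup `G ⊂ GL(2, ℂ)` (no non-identity
element fixes a nonzero vector of `ℂ²`) which is non-abelian contains `-I`. -/
theorem small_nonabelian_contains_neg_one
    (G : Subgroup (GL (Fin 2) ℂ)) (hGfin : (G : Set (GL (Fin 2) ℂ)).Finite)
    (hsmall : ∀ g ∈ G, g ≠ 1 → ∀ v : Fin 2 → ℂ, v ≠ 0 →
      Matrix.mulVecLin (g : Matrix (Fin 2) (Fin 2) ℂ) v ≠ v)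
    (hnab : ¬ ∀ a ∈ G, ∀ b ∈ G, a * b = b * a) :
    (-1 : GL (Fin 2) ℂ) ∈ G := by
  by_contra hneg
  have : Finite G := hGfin.to_subtype
  have hfree : ActsFreely G.subtype := fun g hg v hv => hsmall g g.2 (by simpa using hg) v hv
  have := isMulCommutative_of_actsFreely hfree (by rwa [G.range_subtype])
  exact hnab fun a ha b hb => congrArg Subtype.val (isMulCommutative_iff.mp this ⟨a, ha⟩ ⟨b, hb⟩)
end
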